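/- arXiv:1807.08018 — 5 statements merged into one kernel-verified Lean document; each statement's English description precedes it below -/
import Mathlib

section
/- Let ν be a bivariate copula with CDF C, and let μ₁, μ₂ be probability measures on ℝ with CDFs F₁, F₂. Let T : [0,1]² → ℝ² be the map T(u,v) = (F₁⁻¹(u), F₂⁻¹(v)), where F_i⁻¹ is the generalized inverse of F_i. Then the pushforward measure μ = T_*ν is a probability measure on ℝ² satisfying μ((-∞,x] × (-∞,y]) = C(F₁(x), F₂(y)) for all x, y ∈ ℝ, and the two coordinate marginals of μ are μ₁ and μ₂. -/
/-!
On `(0,1)` the generalized inverse of a CDF `F` satisfies the Galois connection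
`F⁻¹ u ≤ x ↔ u ≤ F x`, so it is monotone there, and a copula puts no mass outside `(0,1)²`.
Hence, up to a null set, the preimage of `(-∞,x] × (-∞,y]` under `T` is
`[0,F₁ x] × [0,F₂ y]`, whose mass is `C(F₁ x, F₂ y)`; the same argument in one variable shows
that `F⁻¹` pushes the uniform measure on `[0,1]` to the measure with CDF `F`, which yields
the marginals.
-/

open MeasureTheory Set ProbabilityTheory Filter Topology

/-- Outside `(0,1)` the `sInf` may be a junk value (it is `0` for `u ≤ 0` and `u > 1`); this
never matters, since the uniform measure and copulas are concentrated on `(0,1)`. -/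
noncomputable def quantile (μ : Measure ℝ) (u : ℝ) : ℝ := sInf {x : ℝ | u ≤ cdf μ x}

section Quantile

variable (μ : Measure ℝ)

lemma bddBelow_setOf_le_cdf {u : ℝ} (hu : 0 < u) : BddBelow {x : ℝ | u ≤ cdf μ x} := by
  obtain ⟨x₀, hx₀⟩ := ((tendsto_cdf_atBot μ).eventually (eventually_lt_nhds hu)).exists
  exact ⟨x₀, fun x hx => le_of_not_gt fun hlt =>
    (hx.trans (monotone_cdf μ hlt.le)).not_gt hx₀⟩

lemma nonempty_setOf_le_cdf {u : ℝ} (hu : u < 1) : {x : ℝ | u ≤ cdf μ x}.Nonempty :=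
  (((tendsto_cdf_atTop μ).eventually (eventually_gt_nhds hu)).exists).imp fun _ => le_of_lt

lemma le_cdf_quantile {u : ℝ} (hu : u ∈ Ioo 0 1) : u ≤ cdf μ (quantile μ u) := by
  have h_above : ∀ y ∈ Ioi (quantile μ u), u ≤ cdf μ y := fun y hy => by
    obtain ⟨x, hx, hxy⟩ := exists_lt_of_csInf_lt (nonempty_setOf_le_cdf μ hu.2) hy
    exact hx.trans (monotone_cdf μ hxy.le)
  exact ge_of_tendsto ((cdf μ).right_continuous _ |>.mono_left
    (nhdsWithin_mono _ Ioi_subset_Ici_self)) (eventually_nhdsWithin_of_forall h_above)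

lemma quantile_le_iff {u : ℝ} (hu : u ∈ Ioo 0 1) (x : ℝ) :
    quantile μ u ≤ x ↔ u ≤ cdf μ x :=
  ⟨fun h => (le_cdf_quantile μ hu).trans (monotone_cdf μ h),
    fun h => csInf_le (bddBelow_setOf_le_cdf μ hu.1) h⟩

lemma monotoneOn_quantile : MonotoneOn (quantile μ) (Ioo 0 1) := fun _ hu _ hv huv =>
  (quantile_le_iff μ hu _).2 (huv.trans ((quantile_le_iff μ hv _).1 le_rfl))

lemma ae_uniform_mem_Ioo : ∀ᵐ u ∂(volume.restrict (Icc (0 : ℝ) 1)), u ∈ Ioo 0 1 := by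
  rw [Measure.restrict_congr_set Ioo_ae_eq_Icc.symm]
  exact ae_restrict_mem measurableSet_Ioo

lemma aemeasurable_quantile : AEMeasurable (quantile μ) (volume.restrict (Icc (0 : ℝ) 1)) := by
  rw [Measure.restrict_congr_set Ioo_ae_eq_Icc.symm]
  exact aemeasurable_restrict_of_monotoneOn measurableSet_Ioo (monotoneOn_quantile μ)

lemma map_quantile_uniform [IsProbabilityMeasure μ] :
    (volume.restrict (Icc (0 : ℝ) 1)).map (quantile μ) = μ := by
  refine Measure.ext_of_Iic _ _ fun x => ?_
  have h_preimage :
      quantile μ ⁻¹' Iic x =ᵐ[volume.restrict (Icc (0 : ℝ) 1)] Icc 0 (cdf μ x) := by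
    refine eventuallyEq_set.2 ?_
    filter_upwards [ae_uniform_mem_Ioo] with u hu
    exact (quantile_le_iff μ hu x).trans (and_iff_right hu.1.le).symm
  rw [Measure.map_apply_of_aemeasurable (aemeasurable_quantile μ) measurableSet_Iic,
    measure_congr h_preimage, Measure.restrict_apply measurableSet_Icc,
    Icc_inter_Icc, max_self, min_eq_left (cdf_le_one μ x), Real.volume_Icc, sub_zero,
    ofReal_cdf]

end Quantile

lemma ae_mem_Ioo_of_map_eq_uniform {α : Type*} [MeasurableSpace α] {ν : Measure α}
    {f : α → ℝ} (hf : Measurable f) (h : ν.map f = volume.restrict (Icc (0 : ℝ) 1)) :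
    ∀ᵐ p ∂ν, f p ∈ Ioo 0 1 :=
  ae_of_ae_map hf.aemeasurable (h ▸ ae_uniform_mem_Ioo)

section ProdMap

variable {α β γ δ : Type*} [MeasurableSpace α] [MeasurableSpace β] [MeasurableSpace γ]
  [MeasurableSpace δ] {ν : Measure (α × β)} {f : α → γ} {g : β → δ}

lemma aemeasurable_prodMap (hf : AEMeasurable f (ν.map Prod.fst))
    (hg : AEMeasurable g (ν.map Prod.snd)) : AEMeasurable (Prod.map f g) ν :=
  (hf.comp_aemeasurable measurable_fst.aemeasurable).prodMk
    (hg.comp_aemeasurable measurable_snd.aemeasurable)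

lemma map_fst_map_prodMap (hf : AEMeasurable f (ν.map Prod.fst))
    (hg : AEMeasurable g (ν.map Prod.snd)) :
    (ν.map (Prod.map f g)).map Prod.fst = (ν.map Prod.fst).map f := by
  rw [AEMeasurable.map_map_of_aemeasurable measurable_fst.aemeasurable
      (aemeasurable_prodMap hf hg), AEMeasurable.map_map_of_aemeasurable hf
      measurable_fst.aemeasurable]
  rfl

lemma map_snd_map_prodMap (hf : AEMeasurable f (ν.map Prod.fst))
    (hg : AEMeasurable g (ν.map Prod.snd)) :
    (ν.map (Prod.map f g)).map Prod.snd = (ν.map Prod.snd).map g := by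
  rw [AEMeasurable.map_map_of_aemeasurable measurable_snd.aemeasurable
      (aemeasurable_prodMap hf hg), AEMeasurable.map_map_of_aemeasurable hg
      measurable_snd.aemeasurable]
  rfl

end ProdMap

lemma map_quantile_prodMap_Iic_prod_Iic (ν : Measure (ℝ × ℝ))
    (hν₁ : ν.map Prod.fst = volume.restrict (Icc (0 : ℝ) 1))
    (hν₂ : ν.map Prod.snd = volume.restrict (Icc (0 : ℝ) 1))
    (μ₁ μ₂ : Measure ℝ) (x y : ℝ) :
    ν.map (Prod.map (quantile μ₁) (quantile μ₂)) (Iic x ×ˢ Iic y)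
      = ν (Icc 0 (cdf μ₁ x) ×ˢ Icc 0 (cdf μ₂ y)) := by
  rw [Measure.map_apply_of_aemeasurable (aemeasurable_prodMap
    (hν₁ ▸ aemeasurable_quantile μ₁) (hν₂ ▸ aemeasurable_quantile μ₂))
    (measurableSet_Iic.prod measurableSet_Iic)]
  refine measure_congr (eventuallyEq_set.2 ?_)
  filter_upwards [ae_mem_Ioo_of_map_eq_uniform measurable_fst hν₁,
    ae_mem_Ioo_of_map_eq_uniform measurable_snd hν₂] with p hp₁ hp₂
  simp only [mem_preimage, Prod.map_fst, Prod.map_snd, mem_prod, mem_Iic, mem_Icc,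
    quantile_le_iff _ hp₁, quantile_le_iff _ hp₂, hp₁.1.le, hp₂.1.le, true_and]

/-- **Sklar construction from a copula and marginals.**
If `ν` is a bivariate copula (a probability measure on `[0,1]² ⊆ ℝ²` whose coordinate
marginals are uniform on `[0,1]`) with CDF `C`, and `μ₁, μ₂` are probability measures
on `ℝ` with CDFs `F₁, F₂` and generalized inverses `Finv₁, Finv₂`, then the pushforward
`μ` of `ν` under `(u,v) ↦ (F₁⁻¹(u), F₂⁻¹(v))` is a probability measure on `ℝ²` with
`μ((-∞,x] × (-∞,y]) = C(F₁(x), F₂(y))` and coordinate marginals `μ₁` and `μ₂`. -/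
theorem copula_pushforward_sklar
    (ν : Measure (ℝ × ℝ)) [IsProbabilityMeasure ν]
    (hν₁ : ν.map Prod.fst = volume.restrict (Icc (0 : ℝ) 1))
    (hν₂ : ν.map Prod.snd = volume.restrict (Icc (0 : ℝ) 1))
    (C : ℝ → ℝ → ℝ)
    (hC : ∀ u v : ℝ, C u v = (ν (Icc 0 u ×ˢ Icc 0 v)).toReal)
    (μ₁ μ₂ : Measure ℝ) [IsProbabilityMeasure μ₁] [IsProbabilityMeasure μ₂]
    (F₁ F₂ : ℝ → ℝ)
    (hF₁ : ∀ x : ℝ, F₁ x = (μ₁ (Iic x)).toReal)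
    (hF₂ : ∀ x : ℝ, F₂ x = (μ₂ (Iic x)).toReal)
    (Finv₁ Finv₂ : ℝ → ℝ)
    (hFinv₁ : ∀ u : ℝ, Finv₁ u = sInf {x : ℝ | u ≤ F₁ x})
    (hFinv₂ : ∀ u : ℝ, Finv₂ u = sInf {x : ℝ | u ≤ F₂ x}) :
    IsProbabilityMeasure (ν.map (fun p : ℝ × ℝ => (Finv₁ p.1, Finv₂ p.2))) ∧
    (∀ x y : ℝ,
      ((ν.map (fun p : ℝ × ℝ => (Finv₁ p.1, Finv₂ p.2))) (Iic x ×ˢ Iic y)).toReal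
        = C (F₁ x) (F₂ y)) ∧
    (ν.map (fun p : ℝ × ℝ => (Finv₁ p.1, Finv₂ p.2))).map Prod.fst = μ₁ ∧
    (ν.map (fun p : ℝ × ℝ => (Finv₁ p.1, Finv₂ p.2))).map Prod.snd = μ₂ := by
  obtain rfl : F₁ = cdf μ₁ := funext fun x => by rw [hF₁, cdf_eq_real, measureReal_def]
  obtain rfl : F₂ = cdf μ₂ := funext fun x => by rw [hF₂, cdf_eq_real, measureReal_def]
  obtain rfl : Finv₁ = quantile μ₁ := funext hFinv₁
  obtain rfl : Finv₂ = quantile μ₂ := funext hFinv₂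
  rw [show (fun p : ℝ × ℝ => (quantile μ₁ p.1, quantile μ₂ p.2))
    = Prod.map (quantile μ₁) (quantile μ₂) from rfl]
  have hq₁ : AEMeasurable (quantile μ₁) (ν.map Prod.fst) := hν₁ ▸ aemeasurable_quantile μ₁
  have hq₂ : AEMeasurable (quantile μ₂) (ν.map Prod.snd) := hν₂ ▸ aemeasurable_quantile μ₂
  refine ⟨Measure.isProbabilityMeasure_map (aemeasurable_prodMap hq₁ hq₂),
    fun x y => ?_, ?_, ?_⟩
  · rw [map_quantile_prodMap_Iic_prod_Iic ν hν₁ hν₂, hC]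
  · rw [map_fst_map_prodMap hq₁ hq₂, hν₁, map_quantile_uniform]
  · rw [map_snd_map_prodMap hq₁ hq₂, hν₂, map_quantile_uniform]
end

section
/- Let μ be a probability measure on ℝ² with density f with respect to Lebesgue measure, whose coordinate marginals have densities f₁, f₂ that are continuous and strictly positive on all of ℝ, with CDFs F₁, F₂ (strictly increasing continuous bijections onto (0,1)). Define the copula density c(u,v) = f(F₁⁻¹(u), F₂⁻¹(v)) / (f₁(F₁⁻¹(u)) · f₂(F₂⁻¹(v))) for (u,v) ∈ (0,1)². If the function (x,y) ↦ f(x,y) · ln( f(x,y) / (f₁(x) f₂(y)) ) is Lebesgue-integrable on ℝ², then ∫_{ℝ²} f(x,y) ln( f(x,y)/(f₁(x) f₂(y)) ) d(x,y) = ∫_{(0,1)²} c(u,v) ln c(u,v) d(u,v). In other words, the mutual information of the two coordinates equals the negative differential entropy of the copula density. -/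
/-!
Substituting `u = F₁ x`, `v = F₂ y` turns `c(u,v) ln c(u,v)` into `q ln q` with
`q = f / (f₁ f₂)`. Since `F₁`, `F₂` are continuous, strictly increasing and onto `(0,1)`, each
pushes its marginal law to the uniform law on `(0,1)`, so the product of the marginals is pushed
to Lebesgue measure on `(0,1)²`. Integrating `q ln q` against the product density `f₁ f₂` gives
`∫ f ln (f / (f₁ f₂))`.
-/

open MeasureTheory Set Filter ProbabilityTheory

namespace ProbabilityTheory

variable {μ : Measure ℝ}

theorem cdf_mem_Ioo (hm : StrictMono (cdf μ)) (x : ℝ) : cdf μ x ∈ Ioo 0 1 :=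
  ⟨(cdf_nonneg μ (x - 1)).trans_lt (hm (sub_one_lt x)),
    (hm (lt_add_one x)).trans_le (cdf_le_one μ _)⟩

variable [IsProbabilityMeasure μ]

theorem continuous_cdf [NullSingletonClass μ] : Continuous (cdf μ) := by
  refine continuous_iff_continuousAt.2 fun x => ?_
  rw [(monotone_cdf μ).continuousAt_iff_leftLim_eq_rightLim, (cdf μ).rightLim_eq]
  have hjump := (cdf μ).measure_singleton x
  rw [measure_cdf, measure_singleton, eq_comm, ENNReal.ofReal_eq_zero] at hjump
  linarith [(monotone_cdf μ).leftLim_le (le_refl x)]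

theorem strictMono_cdf (h : ∀ a b : ℝ, a < b → μ (Ioc a b) ≠ 0) : StrictMono (cdf μ) := by
  intro a b hab
  have hIoc := (cdf μ).measure_Ioc a b
  rw [measure_cdf] at hIoc
  have hpos := h a b hab
  rw [hIoc, Ne, ENNReal.ofReal_eq_zero, not_le] at hpos
  linarith

theorem map_cdf_eq_volume_restrict_Ioo (hc : Continuous (cdf μ)) (hm : StrictMono (cdf μ)) :
    μ.map (cdf μ) = volume.restrict (Ioo 0 1) := by
  have : IsProbabilityMeasure (μ.map (cdf μ)) :=
    Measure.isProbabilityMeasure_map hc.measurable.aemeasurable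
  refine Measure.ext_of_Iic _ _ fun t => ?_
  rw [Measure.map_apply hc.measurable measurableSet_Iic, Measure.restrict_apply measurableSet_Iic]
  rcases le_or_gt t 0 with ht0 | ht0
  · have hempty : cdf μ ⁻¹' Iic t = ∅ :=
      eq_empty_of_forall_notMem fun x hx => (ht0.trans_lt (cdf_mem_Ioo hm x).1).not_ge hx
    have hdisj : Iic t ∩ Ioo 0 1 = ∅ := by
      ext u; simp only [mem_inter_iff, mem_Iic, mem_Ioo, mem_empty_iff_false]; grind
    rw [hempty, hdisj, measure_empty, measure_empty]
  rcases lt_or_ge t 1 with ht1 | ht1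
  · obtain ⟨x, rfl⟩ : t ∈ range (cdf μ) :=
      mem_range_of_exists_le_of_exists_ge hc
        (((tendsto_cdf_atBot μ).eventually (eventually_lt_nhds ht0)).exists.imp fun _ => le_of_lt)
        (((tendsto_cdf_atTop μ).eventually (eventually_gt_nhds ht1)).exists.imp fun _ => le_of_lt)
    have hpre : cdf μ ⁻¹' Iic (cdf μ x) = Iic x := ext fun y => hm.le_iff_le
    have hIoc : Iic (cdf μ x) ∩ Ioo 0 1 = Ioc 0 (cdf μ x) := by
      ext u; simp only [mem_inter_iff, mem_Iic, mem_Ioo, mem_Ioc]; grind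
    rw [hpre, hIoc, ← ofReal_cdf, Real.volume_Ioc, sub_zero]
  · have huniv : cdf μ ⁻¹' Iic t = univ :=
      eq_univ_of_forall fun x => ((cdf_mem_Ioo hm x).2.le.trans ht1 :)
    rw [huniv, inter_eq_right.2 fun u hu => hu.2.le.trans ht1, measure_univ, Real.volume_Ioo,
      sub_zero, ENNReal.ofReal_one]

theorem integral_Ioo_prod_Ioo_eq_integral_cdf {E : Type*} [NormedAddCommGroup E] [NormedSpace ℝ E]
    {ν : Measure ℝ} [IsProbabilityMeasure ν]
    (hμc : Continuous (cdf μ)) (hμm : StrictMono (cdf μ))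
    (hνc : Continuous (cdf ν)) (hνm : StrictMono (cdf ν)) (g : ℝ × ℝ → E) :
    ∫ q in Ioo 0 1 ×ˢ Ioo 0 1, g q = ∫ p, g (cdf μ p.1, cdf ν p.2) ∂(μ.prod ν) := by
  have hT : MeasurableEmbedding (Prod.map (cdf μ) (cdf ν)) :=
    (hμc.measurable.prodMap hνc.measurable).measurableEmbedding
      (hμm.injective.prodMap hνm.injective)
  calc ∫ q in Ioo 0 1 ×ˢ Ioo 0 1, g q
      = ∫ q, g q ∂((μ.map (cdf μ)).prod (ν.map (cdf ν))) := by
        rw [map_cdf_eq_volume_restrict_Ioo hμc hμm, map_cdf_eq_volume_restrict_Ioo hνc hνm,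
          Measure.prod_restrict, Measure.volume_eq_prod]
    _ = ∫ p, g (cdf μ p.1, cdf ν p.2) ∂(μ.prod ν) := by
        rw [Measure.map_prod_map _ _ hμc.measurable hνc.measurable, hT.integral_map]
        rfl

end ProbabilityTheory

theorem cdf_withDensity_ofReal {f : ℝ → ℝ} (hfm : AEStronglyMeasurable f) (hf : 0 ≤ f)
    [IsProbabilityMeasure (volume.withDensity fun x => ENNReal.ofReal (f x))] (x : ℝ) :
    cdf (volume.withDensity fun x => ENNReal.ofReal (f x)) x = ∫ t in Iic x, f t := by
  rw [cdf_eq_real, measureReal_def, withDensity_apply _ measurableSet_Iic,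
    integral_eq_lintegral_of_nonneg_ae (ae_of_all _ fun t => hf t) hfm.restrict]

theorem strictMono_cdf_withDensity_ofReal {f : ℝ → ℝ} (hfm : Measurable f) (hf : ∀ x, 0 < f x)
    [IsProbabilityMeasure (volume.withDensity fun x => ENNReal.ofReal (f x))] :
    StrictMono (cdf (volume.withDensity fun x => ENNReal.ofReal (f x))) := by
  refine strictMono_cdf fun a b hab => ?_
  have hsupport : {x | ENNReal.ofReal (f x) ≠ 0} = univ :=
    eq_univ_of_forall fun x => ENNReal.ofReal_pos.2 (hf x) |>.ne'
  rw [Ne, withDensity_apply_eq_zero' (by fun_prop), hsupport, univ_inter, Real.volume_Ioc,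
    ENNReal.ofReal_eq_zero, not_le, sub_pos]
  exact hab

theorem integral_prod_withDensity_ofReal {α β E : Type*} [MeasurableSpace α] [MeasurableSpace β]
    [NormedAddCommGroup E] [NormedSpace ℝ E] {μ : Measure α} {ν : Measure β} [SFinite μ]
    [SFinite ν] {f₁ : α → ℝ} {f₂ : β → ℝ} (hf₁ : Measurable f₁) (hf₂ : Measurable f₂)
    (h₁ : 0 ≤ f₁) (h₂ : 0 ≤ f₂) (g : α × β → E) :
    ∫ p, g p ∂((μ.withDensity fun x => ENNReal.ofReal (f₁ x)).prod
        (ν.withDensity fun y => ENNReal.ofReal (f₂ y)))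
      = ∫ p, (f₁ p.1 * f₂ p.2) • g p ∂(μ.prod ν) := by
  rw [prod_withDensity (by fun_prop) (by fun_prop), integral_withDensity_eq_integral_toReal_smul
    (by fun_prop) (ae_of_all _ fun _ => ENNReal.mul_lt_top ENNReal.ofReal_lt_top
      ENNReal.ofReal_lt_top)]
  congr with p
  rw [← ENNReal.ofReal_mul (h₁ _), ENNReal.toReal_ofReal (mul_nonneg (h₁ _) (h₂ _))]

theorem mutualInformation_eq_neg_copula_entropy_general
    (μ : Measure (ℝ × ℝ)) [IsProbabilityMeasure μ]
    (f : ℝ → ℝ → ℝ)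
    (f₁ f₂ : ℝ → ℝ)
    (hf₁c : Continuous f₁) (hf₂c : Continuous f₂)
    (hf₁pos : ∀ x : ℝ, 0 < f₁ x) (hf₂pos : ∀ y : ℝ, 0 < f₂ y)
    (hμ₁ : μ.map Prod.fst = volume.withDensity fun x => ENNReal.ofReal (f₁ x))
    (hμ₂ : μ.map Prod.snd = volume.withDensity fun y => ENNReal.ofReal (f₂ y))
    (F₁ F₂ : ℝ → ℝ)
    (hF₁ : ∀ x : ℝ, F₁ x = ∫ t in Iic x, f₁ t)
    (hF₂ : ∀ y : ℝ, F₂ y = ∫ t in Iic y, f₂ t)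
    (Finv₁ Finv₂ : ℝ → ℝ)
    (hFinv₁ : ∀ x : ℝ, Finv₁ (F₁ x) = x)
    (hFinv₂ : ∀ y : ℝ, Finv₂ (F₂ y) = y)
    (c : ℝ → ℝ → ℝ)
    (hcdef : ∀ u ∈ Ioo (0 : ℝ) 1, ∀ v ∈ Ioo (0 : ℝ) 1,
      c u v = f (Finv₁ u) (Finv₂ v) / (f₁ (Finv₁ u) * f₂ (Finv₂ v))) :
    ∫ p : ℝ × ℝ, f p.1 p.2 * Real.log (f p.1 p.2 / (f₁ p.1 * f₂ p.2))
      = ∫ q in Ioo (0 : ℝ) 1 ×ˢ Ioo (0 : ℝ) 1, c q.1 q.2 * Real.log (c q.1 q.2) := by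
  have : IsProbabilityMeasure (volume.withDensity fun x => ENNReal.ofReal (f₁ x)) :=
    hμ₁ ▸ Measure.isProbabilityMeasure_map measurable_fst.aemeasurable
  have : IsProbabilityMeasure (volume.withDensity fun y => ENNReal.ofReal (f₂ y)) :=
    hμ₂ ▸ Measure.isProbabilityMeasure_map measurable_snd.aemeasurable
  have hF₁cdf : F₁ = cdf (volume.withDensity fun x => ENNReal.ofReal (f₁ x)) := funext fun x =>
    (hF₁ x).trans (cdf_withDensity_ofReal hf₁c.aestronglyMeasurable (fun t => (hf₁pos t).le) x).symm
  have hF₂cdf : F₂ = cdf (volume.withDensity fun y => ENNReal.ofReal (f₂ y)) := funext fun y =>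
    (hF₂ y).trans (cdf_withDensity_ofReal hf₂c.aestronglyMeasurable (fun t => (hf₂pos t).le) y).symm
  have hm₁ := strictMono_cdf_withDensity_ofReal hf₁c.measurable hf₁pos
  have hm₂ := strictMono_cdf_withDensity_ofReal hf₂c.measurable hf₂pos
  subst hF₁cdf hF₂cdf
  rw [integral_Ioo_prod_Ioo_eq_integral_cdf continuous_cdf hm₁ continuous_cdf hm₂,
    integral_prod_withDensity_ofReal hf₁c.measurable hf₂c.measurable (fun x => (hf₁pos x).le)
      (fun y => (hf₂pos y).le), ← Measure.volume_eq_prod]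
  refine integral_congr_ae (ae_of_all _ fun p => ?_)
  have hne : f₁ p.1 * f₂ p.2 ≠ 0 := (mul_pos (hf₁pos _) (hf₂pos _)).ne'
  simp only [hcdef _ (cdf_mem_Ioo hm₁ p.1) _ (cdf_mem_Ioo hm₂ p.2), hFinv₁, hFinv₂, smul_eq_mul]
  rw [← mul_assoc, mul_div_cancel₀ _ hne]

/-- **Mutual information equals the negative copula entropy.**
Let `μ` be a bivariate probability law with density `f`, whose marginals have continuous
strictly positive densities `f₁, f₂` with CDFs `F₁, F₂` (with inverses `Finv₁, Finv₂`),
and let `c(u,v) = f(F₁⁻¹(u), F₂⁻¹(v)) / (f₁(F₁⁻¹(u))·f₂(F₂⁻¹(v)))` be the copula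
density on `(0,1)²`. If `f·ln(f/(f₁f₂))` is integrable on `ℝ²`, then
`∫ f ln(f/(f₁f₂)) = ∫_{(0,1)²} c ln c`. -/
theorem mutualInformation_eq_neg_copula_entropy
    (μ : Measure (ℝ × ℝ)) [IsProbabilityMeasure μ]
    (f : ℝ → ℝ → ℝ) (hfm : Measurable fun p : ℝ × ℝ => f p.1 p.2)
    (hμ : μ = volume.withDensity fun p : ℝ × ℝ => ENNReal.ofReal (f p.1 p.2))
    (f₁ f₂ : ℝ → ℝ)
    (hf₁c : Continuous f₁) (hf₂c : Continuous f₂)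
    (hf₁pos : ∀ x : ℝ, 0 < f₁ x) (hf₂pos : ∀ y : ℝ, 0 < f₂ y)
    (hμ₁ : μ.map Prod.fst = volume.withDensity fun x => ENNReal.ofReal (f₁ x))
    (hμ₂ : μ.map Prod.snd = volume.withDensity fun y => ENNReal.ofReal (f₂ y))
    (F₁ F₂ : ℝ → ℝ)
    (hF₁ : ∀ x : ℝ, F₁ x = ∫ t in Iic x, f₁ t)
    (hF₂ : ∀ y : ℝ, F₂ y = ∫ t in Iic y, f₂ t)
    (Finv₁ Finv₂ : ℝ → ℝ)
    (hFinv₁ : ∀ x : ℝ, Finv₁ (F₁ x) = x)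
    (hFinv₂ : ∀ y : ℝ, Finv₂ (F₂ y) = y)
    (c : ℝ → ℝ → ℝ)
    (hcdef : ∀ u ∈ Ioo (0 : ℝ) 1, ∀ v ∈ Ioo (0 : ℝ) 1,
      c u v = f (Finv₁ u) (Finv₂ v) / (f₁ (Finv₁ u) * f₂ (Finv₂ v)))
    (hint : Integrable
      (fun p : ℝ × ℝ => f p.1 p.2 * Real.log (f p.1 p.2 / (f₁ p.1 * f₂ p.2))) volume) :
    ∫ p : ℝ × ℝ, f p.1 p.2 * Real.log (f p.1 p.2 / (f₁ p.1 * f₂ p.2))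
      = ∫ q in Ioo (0 : ℝ) 1 ×ˢ Ioo (0 : ℝ) 1, c q.1 q.2 * Real.log (c q.1 q.2) :=
  mutualInformation_eq_neg_copula_entropy_general μ f f₁ f₂ hf₁c hf₂c hf₁pos hf₂pos hμ₁ hμ₂ F₁ F₂
    hF₁ hF₂ Finv₁ Finv₂ hFinv₁ hFinv₂ c hcdef
end

section
/- Let μ and ν be σ-finite measures on a measurable space α, and let T : α → β be a measurable embedding into a measurable space β. Then the Kullback–Leibler divergence of the pushforward measures equals that of the original measures: klDiv(T_*μ, T_*ν) = klDiv(μ, ν). -/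
open MeasureTheory Classical

/-- The Kullback–Leibler divergence `klDiv μ ν = ∫ log (dμ/dν) dμ` when `μ ≪ ν` (and the
log-likelihood ratio is integrable), and `+∞` otherwise. -/
noncomputable def klDiv {α : Type*} [MeasurableSpace α] (μ ν : Measure α) : EReal :=
  if μ ≪ ν ∧ Integrable (llr μ ν) μ then ((∫ x, llr μ ν x ∂μ : ℝ) : EReal) else ⊤

/-- **Invariance of Kullback–Leibler divergence under measurable embeddings.**
For σ-finite measures `μ, ν` and a measurable embedding `T`,
`klDiv(T_*μ, T_*ν) = klDiv(μ, ν)`. -/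
theorem klDiv_map_measurableEmbedding
    {α β : Type*} [MeasurableSpace α] [MeasurableSpace β]
    (μ ν : Measure α) [SigmaFinite μ] [SigmaFinite ν]
    (T : α → β) (hT : MeasurableEmbedding T) :
    klDiv (μ.map T) (ν.map T) = klDiv μ ν := by
  have hac : μ.map T ≪ ν.map T ↔ μ ≪ ν := by
    constructor
    · intro h s hs
      have h2 : (ν.map T) (T '' s) = 0 := by
        rwa [hT.map_apply, hT.injective.preimage_image]
      have := h h2
      rwa [hT.map_apply, hT.injective.preimage_image] at this
    · exact hT.absolutelyContinuous_map
  by_cases h : μ ≪ ν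
  · have hllr : (fun x ↦ llr (μ.map T) (ν.map T) (T x)) =ᵐ[μ] llr μ ν := by
      filter_upwards [h.ae_le (hT.rnDeriv_map μ ν)] with x hx
      simp [llr, hx]
    have hint : Integrable (llr (μ.map T) (ν.map T)) (μ.map T) ↔ Integrable (llr μ ν) μ := by
      rw [integrable_map_measure (stronglyMeasurable_llr _ _).aestronglyMeasurable
        hT.measurable.aemeasurable]
      exact integrable_congr hllr
    by_cases hi : Integrable (llr μ ν) μ
    · rw [klDiv, klDiv, if_pos ⟨hac.2 h, hint.2 hi⟩, if_pos ⟨h, hi⟩]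
      congr 1
      rw [integral_map hT.measurable.aemeasurable
        (stronglyMeasurable_llr _ _).aestronglyMeasurable]
      exact integral_congr_ae hllr
    · rw [klDiv, klDiv, if_neg (fun hh => hi (hint.1 hh.2)), if_neg (fun hh => hi hh.2)]
  · rw [klDiv, klDiv, if_neg (fun hh => h (hac.1 hh.1)), if_neg (fun hh => h hh.1)]
end

section
/- Let (Ω, P) be a probability space, N_X, N_Y : Ω → ℤ measurable random variables, and U_X, U_Y : Ω → ℝ uniformly distributed on [0,1), such that the pair (N_X, N_Y), the variable U_X, and the variable U_Y are mutually independent. Let g : ℤ → ℝ and L : ℤ → ℝ with L(n) > 0 for all n and with the intervals I_n = [g(n), g(n) + L(n)) pairwise disjoint. Define X̃ = g(N_X) + L(N_X)·U_X and Ỹ = g(N_Y) + L(N_Y)·U_Y. Then the law of the pair (X̃, Ỹ) is absolutely continuous with respect to Lebesgue measure on ℝ², with density q(t,s) = Σ_{n,m ∈ ℤ} ( P(N_X = n, N_Y = m) / (L(n)·L(m)) ) · 1_{I_n}(t) · 1_{I_m}(s). -/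
open MeasureTheory Set


lemma smul_prod_smul_aux {α β : Type*} [MeasurableSpace α] [MeasurableSpace β]
    (c d : ENNReal) (μ : Measure α) (ν : Measure β) [SFinite μ] [SFinite ν] :
    (c • μ).prod (d • ν) = (c * d) • μ.prod ν := by
  ext s hs
  simp [Measure.prod_apply hs, lintegral_smul_measure, lintegral_const_mul'' _
    (measurable_measure_prodMk_left hs).aemeasurable, mul_comm, mul_left_comm, mul_assoc]

lemma affine_map_aux (a b : ℝ) (hb : 0 < b) :
    (volume.restrict (Ico (0:ℝ) 1)).map (fun u => a + b * u)
      = (ENNReal.ofReal b)⁻¹ • volume.restrict (Ico a (a + b)) := by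
  have hf : Measurable (fun u : ℝ => a + b * u) :=
    (measurable_const_mul b).const_add a
  have hpre : (fun u : ℝ => a + b * u) ⁻¹' Ico a (a + b) = Ico (0:ℝ) 1 := by
    ext u
    simp only [mem_preimage, mem_Ico]
    constructor
    · rintro ⟨h1, h2⟩
      constructor <;> nlinarith
    · rintro ⟨h1, h2⟩
      constructor <;> nlinarith
  have hvol : volume.map (fun u : ℝ => a + b * u) = (ENNReal.ofReal b)⁻¹ • volume := by
    have : (fun u : ℝ => a + b * u) = (fun x : ℝ => a + x) ∘ (fun u : ℝ => b * u) := rfl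
    rw [this, ← Measure.map_map (measurable_const_add a) (measurable_const_mul b),
      Real.map_volume_mul_left hb.ne', Measure.map_smul,
      Measure.IsAddLeftInvariant.map_add_left_eq_self a, abs_of_pos (inv_pos.mpr hb),
      ENNReal.ofReal_inv_of_pos hb]
  rw [← hpre, ← Measure.restrict_map hf measurableSet_Ico, hvol, Measure.restrict_smul]

/-- **Continuation by noise of a pair of integer random variables.**
Let `(N_X, N_Y)` be a pair of integer random variables and `U_X, U_Y` uniform on
`[0,1)`, with `(N_X, N_Y)`, `U_X`, `U_Y` mutually independent (expressed as the
factorization of the joint law into the product of the three laws). Let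
`I_n = [g(n), g(n)+L(n))` be pairwise disjoint intervals with `L(n) > 0`. Then the law
of `(X̃, Ỹ) = (g(N_X)+L(N_X)U_X, g(N_Y)+L(N_Y)U_Y)` is absolutely continuous with
respect to Lebesgue measure on `ℝ²`, with density
`q(t,s) = Σ_{n,m} (P(N_X=n, N_Y=m)/(L(n)L(m)))·1_{I_n}(t)·1_{I_m}(s)`. -/
theorem continuation_by_noise_joint_density
    {Ω : Type*} [MeasurableSpace Ω] (P : Measure Ω) [IsProbabilityMeasure P]
    (NX NY : Ω → ℤ) (hNX : Measurable NX) (hNY : Measurable NY)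
    (UX UY : Ω → ℝ) (hUX : Measurable UX) (hUY : Measurable UY)
    (hUXunif : P.map UX = volume.restrict (Ico (0 : ℝ) 1))
    (hUYunif : P.map UY = volume.restrict (Ico (0 : ℝ) 1))
    (hindep : P.map (fun ω => ((NX ω, NY ω), UX ω, UY ω))
      = (P.map (fun ω => (NX ω, NY ω))).prod ((P.map UX).prod (P.map UY)))
    (g L : ℤ → ℝ) (hL : ∀ n : ℤ, 0 < L n)
    (hdisj : ∀ n m : ℤ, n ≠ m →
      Disjoint (Ico (g n) (g n + L n)) (Ico (g m) (g m + L m))) :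
    P.map (fun ω => (g (NX ω) + L (NX ω) * UX ω, g (NY ω) + L (NY ω) * UY ω))
      = volume.withDensity
          (fun p : ℝ × ℝ => ∑' nm : ℤ × ℤ,
            ((Ico (g nm.1) (g nm.1 + L nm.1)) ×ˢ (Ico (g nm.2) (g nm.2 + L nm.2))).indicator
              (fun _ => P {ω | NX ω = nm.1 ∧ NY ω = nm.2} /
                (ENNReal.ofReal (L nm.1) * ENNReal.ofReal (L nm.2))) p) := by
  set lam0 : Measure ℝ := volume.restrict (Ico (0 : ℝ) 1) with hlam0
  set ρ : Measure (ℤ × ℤ) := P.map (fun ω => (NX ω, NY ω)) with hρ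
  set Φ : (ℤ × ℤ) × ℝ × ℝ → ℝ × ℝ :=
    fun p => (g p.1.1 + L p.1.1 * p.2.1, g p.1.2 + L p.1.2 * p.2.2) with hΦdef
  have hgm : Measurable (g : ℤ → ℝ) := measurable_from_top
  have hLm : Measurable (L : ℤ → ℝ) := measurable_from_top
  have hΦ : Measurable Φ := by
    apply Measurable.prod
    · exact ((hgm.comp (measurable_fst.fst)).add
        ((hLm.comp (measurable_fst.fst)).mul (measurable_snd.fst)))
    · exact ((hgm.comp (measurable_fst.snd)).add
        ((hLm.comp (measurable_fst.snd)).mul (measurable_snd.snd)))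
  have hJ : Measurable (fun ω => ((NX ω, NY ω), UX ω, UY ω)) :=
    ((hNX.prodMk hNY).prodMk (hUX.prodMk hUY))
  have hcomp : (fun ω => (g (NX ω) + L (NX ω) * UX ω, g (NY ω) + L (NY ω) * UY ω))
      = Φ ∘ (fun ω => ((NX ω, NY ω), UX ω, UY ω)) := rfl
  rw [hcomp, ← Measure.map_map hΦ hJ, hindep, hUXunif, hUYunif]
  -- decompose ρ as a sum of weighted diracs
  have hρsum : ρ = Measure.sum (fun nm : ℤ × ℤ => ρ {nm} • Measure.dirac nm) :=
    (Measure.sum_smul_dirac ρ).symm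
  rw [hρsum, Measure.prod_sum_left, Measure.map_sum hΦ.aemeasurable]
  -- compute each summand
  have hterm : ∀ nm : ℤ × ℤ,
      ((ρ {nm} • Measure.dirac nm).prod (lam0.prod lam0)).map Φ
        = (ρ {nm} / (ENNReal.ofReal (L nm.1) * ENNReal.ofReal (L nm.2))) •
            (volume : Measure (ℝ × ℝ)).restrict
              ((Ico (g nm.1) (g nm.1 + L nm.1)) ×ˢ (Ico (g nm.2) (g nm.2 + L nm.2))) := by
    intro nm
    have h1 : (ρ {nm} • Measure.dirac nm).prod (lam0.prod lam0)
        = ρ {nm} • (Measure.dirac nm).prod (lam0.prod lam0) := by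
      have := smul_prod_smul_aux (ρ {nm}) 1 (Measure.dirac nm) (lam0.prod lam0)
      simpa using this
    rw [h1, Measure.map_smul, Measure.dirac_prod,
      Measure.map_map hΦ measurable_prodMk_left]
    have h2 : Φ ∘ (Prod.mk nm)
        = Prod.map (fun u : ℝ => g nm.1 + L nm.1 * u) (fun v : ℝ => g nm.2 + L nm.2 * v) := rfl
    rw [h2, ← Measure.map_prod_map _ _
        ((measurable_const_mul (L nm.1)).const_add (g nm.1))
        ((measurable_const_mul (L nm.2)).const_add (g nm.2)),
      hlam0, affine_map_aux _ _ (hL nm.1), affine_map_aux _ _ (hL nm.2),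
      smul_prod_smul_aux, Measure.prod_restrict, ← Measure.volume_eq_prod, smul_smul]
    congr 1
    rw [div_eq_mul_inv,
      ENNReal.mul_inv (Or.inr (ENNReal.ofReal_ne_top)) (Or.inl (ENNReal.ofReal_ne_top))]
  simp_rw [hterm]
  -- compute the right-hand side
  have hmeas : ∀ nm : ℤ × ℤ, Measurable
      (((Ico (g nm.1) (g nm.1 + L nm.1)) ×ˢ (Ico (g nm.2) (g nm.2 + L nm.2))).indicator
        (fun _ => P {ω | NX ω = nm.1 ∧ NY ω = nm.2} /
          (ENNReal.ofReal (L nm.1) * ENNReal.ofReal (L nm.2)))) :=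
    fun nm => measurable_const.indicator (measurableSet_Ico.prod measurableSet_Ico)
  have htsum : (fun p : ℝ × ℝ => ∑' nm : ℤ × ℤ,
      ((Ico (g nm.1) (g nm.1 + L nm.1)) ×ˢ (Ico (g nm.2) (g nm.2 + L nm.2))).indicator
        (fun _ => P {ω | NX ω = nm.1 ∧ NY ω = nm.2} /
          (ENNReal.ofReal (L nm.1) * ENNReal.ofReal (L nm.2))) p)
      = ∑' nm : ℤ × ℤ,
      ((Ico (g nm.1) (g nm.1 + L nm.1)) ×ˢ (Ico (g nm.2) (g nm.2 + L nm.2))).indicator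
        (fun _ => P {ω | NX ω = nm.1 ∧ NY ω = nm.2} /
          (ENNReal.ofReal (L nm.1) * ENNReal.ofReal (L nm.2))) := by
    funext p
    exact (tsum_apply (Pi.summable.2 fun _ => ENNReal.summable)).symm
  rw [htsum, withDensity_tsum hmeas]
  congr 1
  funext nm
  rw [withDensity_indicator (measurableSet_Ico.prod measurableSet_Ico), withDensity_const]
  congr 2
  rw [hρ, Measure.map_apply (hNX.prodMk hNY) (measurableSet_singleton nm)]
  congr 1
  ext ω
  simp [Prod.ext_iff]
end

section
/- Let (Ω, P) be a probability space, N_X, N_Y : Ω → ℤ measurable random variables, and U_X, U_Y : Ω → ℝ uniformly distributed on [0,1), such that the pair (N_X, N_Y), the variable U_X, and the variable U_Y are mutually independent. Let g : ℤ → ℝ and L : ℤ → ℝ with L(n) > 0 for all n and with the intervals I_n = [g(n), g(n) + L(n)) pairwise disjoint. Define X̃ = g(N_X) + L(N_X)·U_X and Ỹ = g(N_Y) + L(N_Y)·U_Y. Then the mutual information is unchanged by the continuation: klDiv( law(X̃, Ỹ), law(X̃) ⊗ law(Ỹ) ) = klDiv( law(N_X, N_Y), law(N_X) ⊗ law(N_Y)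 ). -/
/-!
The continuation `(X̃, Ỹ)` is a measurable function of `((N_X, U_X), (N_Y, U_Y))`, so by the data
processing inequality its mutual information is at most that of `((N_X, U_X), (N_Y, U_Y))`. The
noise is independent of everything else, so the latter equals the mutual information of
`(N_X, N_Y)`: after shuffling coordinates both laws are products with the same factor
`law U_X ⊗ law U_Y`, which the divergence ignores. Conversely, the index of the gap interval
containing `X̃` recovers `N_X` almost surely (and likewise for `Ỹ`), so the mutual information of
`(N_X, N_Y)` is that of a function of `(X̃, Ỹ)`, hence at most that of `(X̃, Ỹ)`.
-/

open MeasureTheory Set Classical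

open Function

section KullbackLeibler

variable {α β : Type*} [MeasurableSpace α] [MeasurableSpace β] {μ ν : Measure α}
  [IsFiniteMeasure μ] [IsFiniteMeasure ν]

-- Mathlib's `InformationTheory.klDiv` adds the correction `ν univ - μ univ` to the integral.
theorem klDiv_eq_coe_klDiv (h : μ univ = ν univ) :
    klDiv μ ν = (InformationTheory.klDiv μ ν : EReal) := by
  by_cases hfin : μ ≪ ν ∧ Integrable (llr μ ν) μ
  · have hmass : ν.real univ - μ.real univ = 0 := by simp [measureReal_def, h]
    have hnonneg := InformationTheory.integral_llr_add_sub_measure_univ_nonneg hfin.1 hfin.2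
    rw [add_sub_assoc, hmass, add_zero] at hnonneg
    rw [klDiv, if_pos hfin, InformationTheory.klDiv_of_ac_of_integrable hfin.1 hfin.2,
      add_sub_assoc, hmass, add_zero, EReal.coe_ennreal_ofReal, max_eq_left hnonneg]
  · rw [klDiv, if_neg hfin, (InformationTheory.klDiv_eq_top_iff).2 (not_and.1 hfin),
      EReal.coe_ennreal_top]

theorem klDiv_map_le (h : μ univ = ν univ) {f : α → β} (hf : Measurable f) :
    klDiv (μ.map f) (ν.map f) ≤ klDiv μ ν := by
  rw [klDiv_eq_coe_klDiv h, klDiv_eq_coe_klDiv (by simpa [Measure.map_apply hf .univ] using h)]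
  exact EReal.coe_ennreal_le_coe_ennreal_iff.2 (InformationTheory.klDiv_map_le μ ν hf)

theorem klDiv_prod_right (h : μ univ = ν univ) (κ : Measure β) [IsProbabilityMeasure κ] :
    klDiv (μ.prod κ) (ν.prod κ) = klDiv μ ν := by
  have hmass : (μ.prod κ) univ = (ν.prod κ) univ := by
    rw [← univ_prod_univ, Measure.prod_prod, Measure.prod_prod, h]
  rw [klDiv_eq_coe_klDiv h, klDiv_eq_coe_klDiv hmass, ← Measure.compProd_const,
    ← Measure.compProd_const, InformationTheory.klDiv_compProd_left]

end KullbackLeibler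

theorem MeasureTheory.Measure.map_prodProdProdComm_prod {α β γ δ : Type*} [MeasurableSpace α]
    [MeasurableSpace β] [MeasurableSpace γ] [MeasurableSpace δ]
    (μa : Measure α) (μb : Measure β) (μc : Measure γ) (μd : Measure δ)
    [SFinite μa] [SFinite μb] [SFinite μc] [SFinite μd] :
    ((μa.prod μb).prod (μc.prod μd)).map (Equiv.prodProdProdComm α β γ δ)
      = (μa.prod μc).prod (μb.prod μd) := by
  -- Reassociate to `α × (β × γ × δ)`, swap `β` and `γ` there, and reassociate back.
  have hbcd : MeasurePreserving (fun x : β × γ × δ => (x.2.1, x.1, x.2.2))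
      (μb.prod (μc.prod μd)) (μc.prod (μb.prod μd)) :=
    (measurePreserving_prodAssoc μc μb μd).comp
      ((Measure.measurePreserving_swap.prod (MeasurePreserving.id μd)).comp
        ((measurePreserving_prodAssoc μb μc μd).symm MeasurableEquiv.prodAssoc))
  exact ((((measurePreserving_prodAssoc μa μc (μb.prod μd)).symm MeasurableEquiv.prodAssoc).comp
    ((MeasurePreserving.id μa).prod hbcd)).comp (measurePreserving_prodAssoc μa μb _)).map_eq

theorem MeasureTheory.Measure.map_prodMk_comp_eq_map_prod {Ω α β α' β' : Type*}
    [MeasurableSpace Ω] [MeasurableSpace α] [MeasurableSpace β] [MeasurableSpace α']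
    [MeasurableSpace β'] {P : Measure Ω} {μ : Measure α} {ν : Measure β} [SFinite μ] [SFinite ν]
    {A : Ω → α} {B : Ω → β} (hA : Measurable A) (hB : Measurable B)
    (h : P.map (fun ω => (A ω, B ω)) = μ.prod ν)
    {f : α → α'} {g : β → β'} (hf : Measurable f) (hg : Measurable g) :
    P.map (fun ω => (f (A ω), g (B ω))) = (μ.map f).prod (ν.map g) := by
  rw [Measure.map_prod_map _ _ hf hg, ← h, Measure.map_map (hf.prodMap hg) (hA.prodMk hB)]
  rfl

theorem ae_mem_of_map_eq_restrict {Ω α : Type*} [MeasurableSpace Ω] [MeasurableSpace α]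
    {P : Measure Ω} {μ : Measure α} {U : Ω → α} {s : Set α} (hU : Measurable U)
    (hs : MeasurableSet s) (h : P.map U = μ.restrict s) : ∀ᵐ ω ∂P, U ω ∈ s := by
  have hmem : ∀ᵐ x ∂P.map U, x ∈ s := h ▸ ae_restrict_mem hs
  exact (ae_map_iff hU.aemeasurable hs).1 hmem

section MemIndex

variable {ι α : Type*} [Nonempty ι] {s : ι → Set α}

-- An arbitrary but fixed index when `x` lies in no `s i`.
noncomputable def memIndex (s : ι → Set α) (x : α) : ι :=
  Classical.epsilon fun i => x ∈ s i

theorem memIndex_eq (hs : Pairwise (Disjoint on s)) {i : ι} {x : α} (hx : x ∈ s i) :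
    memIndex s x = i := by
  by_contra hne
  exact disjoint_left.1 (hs hne) (Classical.epsilon_spec (p := fun j => x ∈ s j) ⟨i, hx⟩) hx

theorem measurable_memIndex [MeasurableSpace α] [MeasurableSpace ι] [Countable ι]
    (hs : Pairwise (Disjoint on s)) (hm : ∀ i, MeasurableSet (s i)) :
    Measurable (memIndex s) := by
  refine measurable_to_countable' fun i => ?_
  have hpre : memIndex s ⁻¹' {i} = s i ∪
      ((⋃ j, s j)ᶜ ∩ {_x | Classical.epsilon (fun _ : ι => False) = i}) := by
    ext x
    by_cases hx : ∃ j, x ∈ s j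
    · obtain ⟨j, hj⟩ := hx
      have hnot : x ∉ (⋃ j, s j)ᶜ := fun h => h (mem_iUnion.2 ⟨j, hj⟩)
      simp only [mem_preimage, mem_singleton_iff, memIndex_eq hs hj, mem_union, mem_inter_iff,
        hnot, false_and, or_false]
      exact ⟨fun hji => hji ▸ hj, fun hi => (memIndex_eq hs hj).symm.trans (memIndex_eq hs hi)⟩
    · push Not at hx
      simp [memIndex, hx]
  rw [hpre]
  exact (hm i).union ((MeasurableSet.iUnion hm).compl.inter (MeasurableSet.const _))

end MemIndex

noncomputable def mutualInfo {Ω α β : Type*} [MeasurableSpace Ω] [MeasurableSpace α]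
    [MeasurableSpace β] (P : Measure Ω) (X : Ω → α) (Y : Ω → β) : EReal :=
  klDiv (P.map fun ω => (X ω, Y ω)) ((P.map X).prod (P.map Y))

section MutualInfo

variable {Ω α β γ δ : Type*} [MeasurableSpace Ω] [MeasurableSpace α] [MeasurableSpace β]
  [MeasurableSpace γ] [MeasurableSpace δ] {P : Measure Ω}

theorem mutualInfo_congr_ae {X X' : Ω → α} {Y Y' : Ω → β} (hX : X =ᵐ[P] X')
    (hY : Y =ᵐ[P] Y') : mutualInfo P X Y = mutualInfo P X' Y' := by
  rw [mutualInfo, mutualInfo, Measure.map_congr hX, Measure.map_congr hY,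
    Measure.map_congr (hX.prodMk hY)]

theorem mutualInfo_comp_le [IsProbabilityMeasure P] {X : Ω → α} {Y : Ω → β}
    (hX : Measurable X) (hY : Measurable Y) {r : α → γ} {s : β → δ}
    (hr : Measurable r) (hs : Measurable s) :
    mutualInfo P (fun ω => r (X ω)) (fun ω => s (Y ω)) ≤ mutualInfo P X Y := by
  have := Measure.isProbabilityMeasure_map (μ := P) hX.aemeasurable
  have := Measure.isProbabilityMeasure_map (μ := P) hY.aemeasurable
  have := Measure.isProbabilityMeasure_map (μ := P) (hX.prodMk hY).aemeasurable
  have hjoint : P.map (fun ω => (r (X ω), s (Y ω)))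
      = (P.map fun ω => (X ω, Y ω)).map (Prod.map r s) := by
    rw [Measure.map_map (hr.prodMap hs) (hX.prodMk hY)]
    rfl
  have hprod : (P.map fun ω => r (X ω)).prod (P.map fun ω => s (Y ω))
      = ((P.map X).prod (P.map Y)).map (Prod.map r s) := by
    rw [← Measure.map_prod_map _ _ hr hs, Measure.map_map hr hX, Measure.map_map hs hY]
    rfl
  rw [mutualInfo, mutualInfo, hjoint, hprod]
  exact klDiv_map_le (by simp) (hr.prodMap hs)

theorem mutualInfo_prodMk_eq_of_indep_noise [IsProbabilityMeasure P]
    {NX : Ω → α} {NY : Ω → β} {UX : Ω → γ} {UY : Ω → δ} (hNX : Measurable NX)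
    (hNY : Measurable NY) (hUX : Measurable UX) (hUY : Measurable UY)
    (hindep : P.map (fun ω => ((NX ω, NY ω), UX ω, UY ω))
      = (P.map (fun ω => (NX ω, NY ω))).prod ((P.map UX).prod (P.map UY))) :
    mutualInfo P (fun ω => (NX ω, UX ω)) (fun ω => (NY ω, UY ω)) = mutualInfo P NX NY := by
  have := Measure.isProbabilityMeasure_map (μ := P) hNX.aemeasurable
  have := Measure.isProbabilityMeasure_map (μ := P) hNY.aemeasurable
  have := Measure.isProbabilityMeasure_map (μ := P) hUX.aemeasurable
  have := Measure.isProbabilityMeasure_map (μ := P) hUY.aemeasurable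
  have := Measure.isProbabilityMeasure_map (μ := P) (hNX.prodMk hNY).aemeasurable
  have hlawX : P.map (fun ω => (NX ω, UX ω)) = (P.map NX).prod (P.map UX) := by
    have h := Measure.map_prodMk_comp_eq_map_prod (hNX.prodMk hNY) (hUX.prodMk hUY) hindep
      measurable_fst measurable_fst
    rwa [Measure.map_map measurable_fst (hNX.prodMk hNY), Measure.map_fst_prod, measure_univ,
      one_smul] at h
  have hlawY : P.map (fun ω => (NY ω, UY ω)) = (P.map NY).prod (P.map UY) := by
    have h := Measure.map_prodMk_comp_eq_map_prod (hNX.prodMk hNY) (hUX.prodMk hUY) hindep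
      measurable_snd measurable_snd
    rwa [Measure.map_map measurable_snd (hNX.prodMk hNY), Measure.map_snd_prod, measure_univ,
      one_smul] at h
  have hcomm : Measurable (Equiv.prodProdProdComm α β γ δ) :=
    (measurable_fst.fst.prodMk measurable_snd.fst).prodMk
      (measurable_fst.snd.prodMk measurable_snd.snd)
  have hjoint : P.map (fun ω => ((NX ω, UX ω), NY ω, UY ω))
      = ((P.map fun ω => (NX ω, NY ω)).prod ((P.map UX).prod (P.map UY))).map
          (Equiv.prodProdProdComm α β γ δ) := by
    rw [← hindep, Measure.map_map hcomm ((hNX.prodMk hNY).prodMk (hUX.prodMk hUY))]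
    rfl
  refine le_antisymm ?_ (mutualInfo_comp_le (hNX.prodMk hUX) (hNY.prodMk hUY) measurable_fst
    measurable_fst)
  rw [mutualInfo, hjoint, hlawX, hlawY, ← Measure.map_prodProdProdComm_prod]
  exact (klDiv_map_le (by simp) hcomm).trans_eq (klDiv_prod_right (by simp) _)

end MutualInfo

section Continuation

variable {ι : Type*} {g L : ι → ℝ}

def continuationMap (g L : ι → ℝ) (p : ι × ℝ) : ℝ := g p.1 + L p.1 * p.2

theorem measurable_continuationMap [MeasurableSpace ι] [Countable ι] [MeasurableSingletonClass ι]
    (g L : ι → ℝ) : Measurable (continuationMap g L) :=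
  ((measurable_of_countable g).comp measurable_fst).add
    (((measurable_of_countable L).comp measurable_fst).mul measurable_snd)

theorem continuationMap_mem_Ico {n : ι} (hL : 0 < L n) {u : ℝ} (hu : u ∈ Ico (0 : ℝ) 1) :
    continuationMap g L (n, u) ∈ Ico (g n) (g n + L n) := by
  simp only [continuationMap, mem_Ico] at hu ⊢
  constructor <;> nlinarith

theorem memIndex_continuationMap [Nonempty ι]
    (hdisj : Pairwise (Disjoint on fun n => Ico (g n) (g n + L n)))
    {n : ι} (hL : 0 < L n) {u : ℝ} (hu : u ∈ Ico (0 : ℝ) 1) :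
    memIndex (fun n => Ico (g n) (g n + L n)) (continuationMap g L (n, u)) = n :=
  memIndex_eq hdisj (continuationMap_mem_Ico hL hu)

end Continuation

/-- **Continuation by noise preserves mutual information.**
Let `(N_X, N_Y)` be a pair of integer random variables and `U_X, U_Y` uniform on
`[0,1)`, with `(N_X, N_Y)`, `U_X`, `U_Y` mutually independent (expressed as the
factorization of the joint law into the product of the three laws). Let
`I_n = [g(n), g(n)+L(n))` be pairwise disjoint intervals with `L(n) > 0`, and set
`X̃ = g(N_X)+L(N_X)U_X`, `Ỹ = g(N_Y)+L(N_Y)U_Y`. Then the mutual information (the KL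
divergence of the joint law from the product of the marginals) is unchanged:
`klDiv(law(X̃,Ỹ), law(X̃) ⊗ law(Ỹ)) = klDiv(law(N_X,N_Y), law(N_X) ⊗ law(N_Y))`. -/
theorem continuation_by_noise_mutualInformation
    {Ω : Type*} [MeasurableSpace Ω] (P : Measure Ω) [IsProbabilityMeasure P]
    (NX NY : Ω → ℤ) (hNX : Measurable NX) (hNY : Measurable NY)
    (UX UY : Ω → ℝ) (hUX : Measurable UX) (hUY : Measurable UY)
    (hUXunif : P.map UX = volume.restrict (Ico (0 : ℝ) 1))
    (hUYunif : P.map UY = volume.restrict (Ico (0 : ℝ) 1))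
    (hindep : P.map (fun ω => ((NX ω, NY ω), UX ω, UY ω))
      = (P.map (fun ω => (NX ω, NY ω))).prod ((P.map UX).prod (P.map UY)))
    (g L : ℤ → ℝ) (hL : ∀ n : ℤ, 0 < L n)
    (hdisj : ∀ n m : ℤ, n ≠ m →
      Disjoint (Ico (g n) (g n + L n)) (Ico (g m) (g m + L m))) :
    klDiv
        (P.map (fun ω => (g (NX ω) + L (NX ω) * UX ω, g (NY ω) + L (NY ω) * UY ω)))
        ((P.map (fun ω => g (NX ω) + L (NX ω) * UX ω)).prod
          (P.map (fun ω => g (NY ω) + L (NY ω) * UY ω)))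
      = klDiv (P.map (fun ω => (NX ω, NY ω))) ((P.map NX).prod (P.map NY)) := by
  set T := continuationMap g L
  set index := memIndex fun n => Ico (g n) (g n + L n)
  have hT : Measurable T := measurable_continuationMap g L
  have hindex : Measurable index := measurable_memIndex hdisj fun _ => measurableSet_Ico
  have hX : Measurable fun ω => T (NX ω, UX ω) := hT.comp (hNX.prodMk hUX)
  have hY : Measurable fun ω => T (NY ω, UY ω) := hT.comp (hNY.prodMk hUY)
  have hdecodeX : (fun ω => index (T (NX ω, UX ω))) =ᵐ[P] NX := by
    filter_upwards [ae_mem_of_map_eq_restrict hUX measurableSet_Ico hUXunif] with ω hω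
    exact memIndex_continuationMap hdisj (hL _) hω
  have hdecodeY : (fun ω => index (T (NY ω, UY ω))) =ᵐ[P] NY := by
    filter_upwards [ae_mem_of_map_eq_restrict hUY measurableSet_Ico hUYunif] with ω hω
    exact memIndex_continuationMap hdisj (hL _) hω
  change mutualInfo P (fun ω => T (NX ω, UX ω)) (fun ω => T (NY ω, UY ω)) = mutualInfo P NX NY
  refine le_antisymm ?_ ?_
  · calc _ ≤ mutualInfo P (fun ω => (NX ω, UX ω)) (fun ω => (NY ω, UY ω)) :=
          mutualInfo_comp_le (hNX.prodMk hUX) (hNY.prodMk hUY) hT hT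
      _ = mutualInfo P NX NY := mutualInfo_prodMk_eq_of_indep_noise hNX hNY hUX hUY hindep
  · calc mutualInfo P NX NY
        = mutualInfo P (fun ω => index (T (NX ω, UX ω))) (fun ω => index (T (NY ω, UY ω))) :=
          mutualInfo_congr_ae hdecodeX.symm hdecodeY.symm
      _ ≤ _ := mutualInfo_comp_le hX hY hindex hindex
end
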